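/- arXiv:0908.2332 — 7 statements merged into one kernel-verified Lean document; each statement's English description precedes it below -/
import Mathlib

section
/- Every continuous linear endomorphism φ of ℂ[[x]] (with the topology of coefficientwise convergence) is of the form Φ_M for a unique row-finite matrix M : ℕ×ℕ → ℂ. -/
/-- A row-finite matrix: each row is finitely supported. -/
def RowFinite (M : ℕ → ℕ → ℂ) : Prop :=
  ∀ n, (Function.support (M n)).Finite

/-- The operator `Φ_M` on `ℂ[[x]]` associated with a matrix `M`:
the `n`-th coefficient of `Φ_M(f)` is `Σ_k M[n,k]·a_k` where `a_k` are the
coefficients of `f`. -/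
noncomputable def Phi (M : ℕ → ℕ → ℂ) (f : PowerSeries ℂ) : PowerSeries ℂ :=
  PowerSeries.mk fun n => ∑ᶠ k, M n k * PowerSeries.coeff (R := ℂ) k f

/-- The Fréchet topology of simple (coefficientwise) convergence on `ℂ[[x]]`:
the topology induced by the coefficient maps into the product `ℕ → ℂ`. -/
noncomputable def coeffTopology : TopologicalSpace (PowerSeries ℂ) :=
  TopologicalSpace.induced (fun f n => PowerSeries.coeff (R := ℂ) n f)
    (Pi.topologicalSpace (ι := ℕ) (Y := fun _ => ℂ))


/-! The row functional `f ↦ coeff n (φ f)` is continuous for the weak topology generated by the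
coefficient functionals, hence lies in their linear span: it is a finite linear combination
`∑ k, c n k • coeff k`, and the finitely supported `c n` is the `n`-th row of `M`.
Uniqueness holds because `M n k` is the `n`-th coefficient of `Φ_M (X ^ k)`. -/

open PowerSeries Topology

lemma coeffTopology_eq_iInf :
    coeffTopology = ⨅ k, TopologicalSpace.induced (coeff (R := ℂ) k) inferInstance := by
  simp only [coeffTopology, Pi.topologicalSpace, induced_iInf, induced_compose]
  rfl

lemma coeff_Phi_finsupp (c : ℕ → ℕ →₀ ℂ) (f : PowerSeries ℂ) (n : ℕ) :
    coeff n (Phi (fun n k => c n k) f) = (c n).sum fun k a => a * coeff k f := by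
  rw [Phi, coeff_mk, Finsupp.sum]
  exact finsum_eq_sum_of_support_subset _
    ((Function.support_mul_subset_left _ _).trans_eq (c n).fun_support_eq)

lemma coeff_Phi_monomial (M : ℕ → ℕ → ℂ) (n k : ℕ) :
    coeff n (Phi M (monomial k 1)) = M n k := by
  rw [Phi, coeff_mk, finsum_eq_single _ k]
  · simp
  · intro j hj
    simp [coeff_monomial, hj]

lemma Phi_injective : Function.Injective Phi := fun M M' h => by
  funext n k
  rw [← coeff_Phi_monomial M, ← coeff_Phi_monomial M', h]

lemma coeff_comp_mem_span_coeff {φ : PowerSeries ℂ →ₗ[ℂ] PowerSeries ℂ}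
    (hφ : Continuous[coeffTopology, coeffTopology] φ) (n : ℕ) :
    (coeff n).comp φ ∈ Submodule.span ℂ (Set.range fun k => (coeff k : PowerSeries ℂ →ₗ[ℂ] ℂ)) := by
  let _ := coeffTopology
  rw [LinearMap.mem_span_iff_continuous, ← coeffTopology_eq_iInf]
  exact ((continuous_apply n).comp continuous_induced_dom).comp hφ

/-- Every continuous linear endomorphism of `ℂ[[x]]` (with the topology of
coefficientwise convergence) is `Φ_M` for a unique row-finite matrix `M`. -/
theorem stmt_4 (φ : PowerSeries ℂ →ₗ[ℂ] PowerSeries ℂ)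
    (hφ : @Continuous _ _ coeffTopology coeffTopology φ) :
    ∃! M : ℕ → ℕ → ℂ, RowFinite M ∧ ∀ f, φ f = Phi M f := by
  choose c hc using fun n =>
    Finsupp.mem_span_range_iff_exists_finsupp.mp (coeff_comp_mem_span_coeff hφ n)
  have hφc (f : PowerSeries ℂ) : φ f = Phi (fun n k => c n k) f := by
    ext n
    rw [coeff_Phi_finsupp, ← LinearMap.comp_apply, ← hc n, LinearMap.finsupp_sum_apply]
    rfl
  exact ⟨fun n k => c n k, ⟨fun n => (c n).hasFiniteSupport, hφc⟩,
    fun M ⟨_, hM⟩ => Phi_injective (funext fun f => by rw [← hM, hφc])⟩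
end

section
/- Let e ≥ 0 be a natural number, let S : ℕ×ℕ → ℂ be such that for each n the function k ↦ S(n,k) is finitely supported, and let g, φ ∈ ℂ[[x]]. Then the following two conditions are equivalent. (i) In ℂ[[x,y]]: Σ_{n,k ≥ 0} S(n,k)·(x^n/n!)·y^k = g(x)·exp(y·φ(x)), where exp(y·φ(x)) := Σ_{k≥0} y^k·φ(x)^k/k!. (ii) For every f ∈ ℂ[[x]], the following identity holds in ℂ[[x,λ]]: Σ_{n,k ≥ 0} S(n,k)·(λ^n/n!)·x^{ne+k}·(D^k f)(x) = g(λx^e)·f(x·(1+φ(λx^e))), where D is the formal derivative of power series, g(λx^e) and φ(λx^e) denote substitution of the series λx^e (which has zero constant term) into g and φ, and f(x·(1+φ(λx^e))) denotes substitution of the series x·(1+φ(λx^e)) (which has zero constant term) into f. (Here for each n the sum over k is finite, and the total sum converges coefficientwise in λ.) -/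
open PowerSeries

/-- View a coefficient function as a formal power series in two variables. -/
def mk2 (F : (Fin 2 →₀ ℕ) → ℂ) : MvPowerSeries (Fin 2) ℂ := F

/-- Substitution of a two-variable formal power series `u` (with zero constant term)
into a one-variable formal power series `h` : the coefficient of `h ∘ u` at `d` is
`Σ_j h_j · coeff_d (u^j)`, a finite sum when `u` has zero constant term. -/
noncomputable def subst1 (h : PowerSeries ℂ) (u : MvPowerSeries (Fin 2) ℂ) :
    MvPowerSeries (Fin 2) ℂ :=
  mk2 fun d => ∑ᶠ j : ℕ, PowerSeries.coeff j h * MvPowerSeries.coeff d (u ^ j)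

/-- The two-variable series `exp(y·φ(x)) := Σ_{k≥0} y^k·φ(x)^k/k!` (here the first
variable is `x`, the second is `y`): its coefficient at `x^m y^k` is `coeff_m(φ^k)/k!`. -/
noncomputable def expY (φ : PowerSeries ℂ) : MvPowerSeries (Fin 2) ℂ :=
  mk2 fun d => PowerSeries.coeff (d 0) (φ ^ (d 1)) / (Nat.factorial (d 1) : ℂ)

/-!
At `x^m λ^n` both sides of (ii) vanish unless `n e ≤ m`, and otherwise equal `f_p` times a number
depending only on `n` and `p = m - n e`: on the left `Σ_k S(n,k)/n! · p(p-1)⋯(p-k+1)`, because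
`x^{ne+k} D^k` sends `x^p` to `p(p-1)⋯(p-k+1) x^{ne+p}`; on the right `[t^n] g(t)(1+φ(t))^p`, which
the binomial theorem writes as `Σ_k [t^n](g φ^k)/k! · p(p-1)⋯(p-k+1)`. Condition (i) says exactly
`S(n,k)/n! = [t^n](g φ^k)/k!`, so (i) gives (ii); conversely `f = x^p` yields equality of the two
sums for every `p`, a unitriangular system in the falling factorials, which forces (i).
The substitutions `subst1` agree with `PowerSeries.subst`, hence are ring homomorphisms.
-/

open Finset

namespace PowerSeries

theorem coeff_mul_subst {σ R : Type*} [CommRing R] {a : MvPowerSeries σ R}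
    (ha : HasSubst a) (A : MvPowerSeries σ R) (f : R⟦X⟧) (d : σ →₀ ℕ) :
    MvPowerSeries.coeff d (A * f.subst a) =
      ∑ᶠ j, coeff j f * MvPowerSeries.coeff d (A * a ^ j) := by
  classical
  have hfin (p : (σ →₀ ℕ) × (σ →₀ ℕ)) :
      (fun j ↦ MvPowerSeries.coeff p.1 A *
        (coeff j f * MvPowerSeries.coeff p.2 (a ^ j))).HasFiniteSupport :=
    (coeff_subst_finite ha f p.2).subset (Function.support_mul_subset_right _ _)
  simp_rw [MvPowerSeries.coeff_mul, coeff_subst ha, smul_eq_mul]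
  rw [sum_congr rfl fun p _ ↦ mul_finsum' _ _ (coeff_subst_finite ha f p.2),
    ← finsum_sum_comm _ _ fun p _ ↦ hfin p]
  refine finsum_congr fun j ↦ ?_
  rw [mul_sum]
  exact sum_congr rfl fun p _ ↦ by ring

theorem coeff_X_pow_add_mul_iterate_derivative {R : Type*} [CommSemiring R] (f : R⟦X⟧)
    (q k m : ℕ) :
    coeff m (X ^ (q + k) * (d⁄dX R)^[k] f) =
      if q ≤ m then ((m - q).descFactorial k : R) * coeff (m - q) f else 0 := by
  rw [coeff_X_pow_mul']
  split_ifs with hqk hq hq'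
  · obtain ⟨r, rfl⟩ := Nat.exists_eq_add_of_le hqk
    rw [coeff_iterate_derivative, ← Nat.add_descFactorial_eq_ascFactorial]
    congr 3 <;> omega
  · omega
  · rw [Nat.descFactorial_of_lt (by omega), Nat.cast_zero, zero_mul]
  · rfl

theorem finsum_mul_descFactorial_eq_sum_range {R : Type*} [Semiring R] (c : ℕ → R) (p : ℕ) :
    ∑ᶠ k, c k * p.descFactorial k = ∑ k ∈ range (p + 1), c k * p.descFactorial k := by
  refine finsum_eq_sum_of_support_subset _ fun k hk ↦ ?_
  by_contra hkp
  simp_all [Nat.descFactorial_of_lt]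

theorem finsum_mul_coeff_X_pow_add_mul_iterate_derivative {R : Type*} [CommSemiring R]
    (c : ℕ → R) (f : R⟦X⟧) (q m : ℕ) :
    ∑ᶠ k, c k * coeff m (X ^ (q + k) * (d⁄dX R)^[k] f) =
      if q ≤ m then
        coeff (m - q) f * ∑ k ∈ range (m - q + 1), c k * (m - q).descFactorial k
      else 0 := by
  simp_rw [coeff_X_pow_add_mul_iterate_derivative]
  split_ifs
  · have hterm (k : ℕ) : c k * ((m - q).descFactorial k * coeff (m - q) f) =
        coeff (m - q) f * c k * (m - q).descFactorial k := by ring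
    rw [finsum_congr hterm,
      finsum_mul_descFactorial_eq_sum_range (fun k ↦ coeff (m - q) f * c k), mul_sum]
    simp only [mul_assoc]
  · simp

theorem coeff_mul_one_add_pow {K : Type*} [Field K] [CharZero K] (g φ : K⟦X⟧) (n p : ℕ) :
    coeff n (g * (1 + φ) ^ p) =
      ∑ k ∈ range (p + 1), coeff n (g * φ ^ k) / k.factorial * p.descFactorial k := by
  rw [add_comm, add_pow, mul_sum, map_sum]
  refine sum_congr rfl fun k _ ↦ ?_
  rw [one_pow, mul_one, ← map_natCast (C (R := K)), ← mul_assoc, coeff_mul_C,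
    Nat.descFactorial_eq_factorial_mul_choose]
  push_cast
  rw [← mul_assoc, div_mul_cancel₀ _ (Nat.cast_ne_zero.mpr k.factorial_ne_zero)]

end PowerSeries

theorem eq_of_forall_sum_mul_descFactorial_eq {R : Type*} [CommRing R] [IsDomain R]
    [CharZero R] {a b : ℕ → R}
    (h : ∀ p, ∑ k ∈ range (p + 1), a k * p.descFactorial k =
      ∑ k ∈ range (p + 1), b k * p.descFactorial k) : a = b := by
  funext p
  induction p using Nat.strong_induction_on with
  | _ p ih =>
    have hp := h p
    rw [sum_range_succ, sum_range_succ,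
      sum_congr rfl fun k hk ↦ by rw [ih k (mem_range.mp hk)], add_left_cancel_iff] at hp
    refine mul_right_cancel₀ ?_ hp
    rw [Nat.descFactorial_self]
    exact_mod_cast p.factorial_ne_zero

section TwoVariables

local notation "X₀" => MvPowerSeries.X (0 : Fin 2)
local notation "X₁" => MvPowerSeries.X (1 : Fin 2)

variable {R : Type*} [CommRing R]

theorem coeff_X_zero_pow_mul_X_one_pow (d : Fin 2 →₀ ℕ) (a b : ℕ) :
    MvPowerSeries.coeff d (X₀ ^ a * X₁ ^ b : MvPowerSeries (Fin 2) R) =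
      if d 0 = a ∧ d 1 = b then 1 else 0 := by
  classical
  rw [MvPowerSeries.X_pow_eq, MvPowerSeries.X_pow_eq, MvPowerSeries.monomial_mul_monomial,
    one_mul, MvPowerSeries.coeff_monomial]
  congr 1
  refine propext ⟨by rintro rfl; simp, fun ⟨h0, h1⟩ ↦ ?_⟩
  ext i
  fin_cases i <;> simp [h0, h1]

theorem coeff_X_one_pow_mul_subst_X_zero (h : R⟦X⟧) (k : ℕ) (d : Fin 2 →₀ ℕ) :
    MvPowerSeries.coeff d (X₁ ^ k * h.subst (X₀ : MvPowerSeries (Fin 2) R)) =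
      if d 1 = k then coeff (d 0) h else 0 := by
  have hcomm (i : ℕ) : (X₁ ^ k * X₀ ^ i : MvPowerSeries (Fin 2) R) = X₀ ^ i * X₁ ^ k :=
    mul_comm _ _
  rw [coeff_mul_subst (HasSubst.X 0), finsum_eq_single _ (d 0) fun j hj ↦ ?_]
  · simp [hcomm, coeff_X_zero_pow_mul_X_one_pow]
  · simp [hcomm, coeff_X_zero_pow_mul_X_one_pow, Ne.symm hj]

theorem hasSubst_X_one_mul_X_zero_pow (e : ℕ) :
    HasSubst (X₁ * X₀ ^ e : MvPowerSeries (Fin 2) R) :=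
  HasSubst.of_constantCoeff_zero (by simp)

theorem coeff_X_zero_pow_mul_subst_X_one_mul_X_zero_pow (h : R⟦X⟧) (e j : ℕ)
    (d : Fin 2 →₀ ℕ) :
    MvPowerSeries.coeff d (X₀ ^ j * h.subst (X₁ * X₀ ^ e : MvPowerSeries (Fin 2) R)) =
      if d 0 = j + d 1 * e then coeff (d 1) h else 0 := by
  have hpow (i : ℕ) : (X₀ ^ j * (X₁ * X₀ ^ e) ^ i : MvPowerSeries (Fin 2) R) =
      X₀ ^ (j + i * e) * X₁ ^ i := by ring
  rw [coeff_mul_subst (hasSubst_X_one_mul_X_zero_pow e), finsum_eq_single _ (d 1) fun i hi ↦ ?_]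
  · simp [hpow, coeff_X_zero_pow_mul_X_one_pow]
  · simp [hpow, coeff_X_zero_pow_mul_X_one_pow, Ne.symm hi]

theorem coeff_subst_mul_subst_X_zero_mul_one_add_subst (e : ℕ) (g φ f : R⟦X⟧)
    (d : Fin 2 →₀ ℕ) :
    MvPowerSeries.coeff d ((g.subst (X₁ * X₀ ^ e : MvPowerSeries (Fin 2) R)) *
        f.subst (X₀ * (1 + φ.subst (X₁ * X₀ ^ e : MvPowerSeries (Fin 2) R)))) =
      if d 1 * e ≤ d 0 then
        coeff (d 0 - d 1 * e) f * coeff (d 1) (g * (1 + φ) ^ (d 0 - d 1 * e))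
      else 0 := by
  have hu := hasSubst_X_one_mul_X_zero_pow (R := R) e
  have hw : HasSubst (X₀ * (1 + φ.subst (X₁ * X₀ ^ e : MvPowerSeries (Fin 2) R))) :=
    HasSubst.of_constantCoeff_zero (by simp)
  have hpow (j : ℕ) : g.subst (X₁ * X₀ ^ e) * (X₀ * (1 + φ.subst (X₁ * X₀ ^ e))) ^ j =
      X₀ ^ j * (g * (1 + φ) ^ j).subst (X₁ * X₀ ^ e : MvPowerSeries (Fin 2) R) := by
    simp only [← coe_substAlgHom hu, map_mul, map_pow, map_add, map_one, mul_pow]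
    ring
  simp only [coeff_mul_subst hw, hpow, coeff_X_zero_pow_mul_subst_X_one_mul_X_zero_pow]
  split_ifs with h
  · rw [finsum_eq_single _ (d 0 - d 1 * e) fun j hj ↦ by rw [if_neg (by omega), mul_zero],
      if_pos (by omega)]
  · exact finsum_eq_zero_of_forall_eq_zero fun j ↦ by rw [if_neg (by omega), mul_zero]

theorem coeff_subst_X_zero_mul_subst_exp {K : Type*} [Field K] [CharZero K] (g φ : K⟦X⟧)
    (d : Fin 2 →₀ ℕ) :
    MvPowerSeries.coeff d (g.subst (X₀ : MvPowerSeries (Fin 2) K) *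
        (exp K).subst (X₁ * φ.subst (X₀ : MvPowerSeries (Fin 2) K))) =
      coeff (d 0) (g * φ ^ d 1) / (d 1).factorial := by
  have hX : HasSubst (X₀ : MvPowerSeries (Fin 2) K) := HasSubst.X 0
  have hv : HasSubst (X₁ * φ.subst (X₀ : MvPowerSeries (Fin 2) K)) :=
    HasSubst.of_constantCoeff_zero (by simp)
  have hpow (k : ℕ) : g.subst (X₀ : MvPowerSeries (Fin 2) K) * (X₁ * φ.subst X₀) ^ k =
      X₁ ^ k * (g * φ ^ k).subst (X₀ : MvPowerSeries (Fin 2) K) := by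
    rw [subst_mul hX, subst_pow hX]
    ring
  rw [coeff_mul_subst hv, finsum_eq_single _ (d 1) fun k hk ↦ ?_]
  · simp [hpow, coeff_X_one_pow_mul_subst_X_zero, coeff_exp, div_eq_inv_mul]
  · simp [hpow, coeff_X_one_pow_mul_subst_X_zero, Ne.symm hk]

theorem expY_eq_subst_exp (φ : ℂ⟦X⟧) : expY φ = (exp ℂ).subst (X₁ * φ.subst X₀) := by
  ext d
  have hone : (1 : ℂ⟦X⟧).subst (X₀ : MvPowerSeries (Fin 2) ℂ) = 1 := by
    rw [← coe_substAlgHom (HasSubst.X 0), map_one]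
  have h := coeff_subst_X_zero_mul_subst_exp 1 φ d
  rw [hone, one_mul, one_mul] at h
  exact h.symm

end TwoVariables

theorem subst1_eq_subst {u : MvPowerSeries (Fin 2) ℂ} (hu : HasSubst u) (h : ℂ⟦X⟧) :
    subst1 h u = h.subst u := by
  ext d
  rw [coeff_subst hu]
  rfl

theorem stmt_5_general (e : ℕ) (S : ℕ → ℕ → ℂ) (g φ : PowerSeries ℂ) :
    (∀ d : Fin 2 →₀ ℕ,
        S (d 0) (d 1) / (Nat.factorial (d 0) : ℂ) =
          MvPowerSeries.coeff d (subst1 g (MvPowerSeries.X 0) * expY φ)) ↔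
    (∀ f : PowerSeries ℂ, ∀ d : Fin 2 →₀ ℕ,
        (∑ᶠ k : ℕ, S (d 1) k * ((Nat.factorial (d 1) : ℂ)⁻¹ *
            PowerSeries.coeff (d 0)
              (PowerSeries.X ^ ((d 1) * e + k) * PowerSeries.derivativeFun^[k] f))) =
          MvPowerSeries.coeff d
            (subst1 g (MvPowerSeries.X 1 * MvPowerSeries.X 0 ^ e) *
              subst1 f (MvPowerSeries.X 0 *
                (1 + subst1 φ (MvPowerSeries.X 1 * MvPowerSeries.X 0 ^ e))))) := by
  have hu := hasSubst_X_one_mul_X_zero_pow (R := ℂ) e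
  have hw : HasSubst (MvPowerSeries.X 0 *
      (1 + φ.subst (MvPowerSeries.X 1 * MvPowerSeries.X 0 ^ e : MvPowerSeries (Fin 2) ℂ))) :=
    HasSubst.of_constantCoeff_zero (by simp)
  have hD : (derivativeFun : ℂ⟦X⟧ → ℂ⟦X⟧) = d⁄dX ℂ := rfl
  simp only [subst1_eq_subst (HasSubst.X 0), subst1_eq_subst hu, subst1_eq_subst hw,
    expY_eq_subst_exp, coeff_subst_X_zero_mul_subst_exp, hD, ← mul_assoc,
    finsum_mul_coeff_X_pow_add_mul_iterate_derivative,
    coeff_subst_mul_subst_X_zero_mul_one_add_subst, coeff_mul_one_add_pow, ← div_eq_mul_inv]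
  have hpair (a b : ℕ) : ∃ d : Fin 2 →₀ ℕ, d 0 = a ∧ d 1 = b :=
    ⟨Finsupp.equivFunOnFinite.symm ![a, b], by simp, by simp⟩
  constructor
  · intro hi f d
    split_ifs
    · congr 1
      refine sum_congr rfl fun k _ ↦ ?_
      obtain ⟨d', h0, h1⟩ := hpair (d 1) k
      rw [← h0, ← h1, hi d']
    · rfl
  · intro hii d
    refine congrFun (eq_of_forall_sum_mul_descFactorial_eq
      (a := fun k ↦ S (d 0) k / (d 0).factorial)
      (b := fun k ↦ coeff (d 0) (g * φ ^ k) / k.factorial) fun p ↦ ?_) (d 1)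
    obtain ⟨d', h0, h1⟩ := hpair (d 0 * e + p) (d 0)
    have := hii (X ^ p) d'
    rwa [h0, h1, if_pos (Nat.le_add_right _ _), if_pos (Nat.le_add_right _ _),
      Nat.add_sub_cancel_left, coeff_X_pow_self, one_mul, one_mul] at this

/-- Generalized Stirling numbers via generating functions: for a row-finite array
`S(n,k)` and `g, φ ∈ ℂ[[x]]`, the double generating-function identity
`Σ_{n,k} S(n,k)·(x^n/n!)·y^k = g(x)·exp(y·φ(x))` in `ℂ[[x,y]]` holds iff for every
`f ∈ ℂ[[x]]` one has, in `ℂ[[x,λ]]`,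
`Σ_{n,k} S(n,k)·(λ^n/n!)·x^{ne+k}·(D^k f)(x) = g(λx^e)·f(x·(1+φ(λx^e)))`.
(The first variable of `MvPowerSeries (Fin 2) ℂ` is `x`, the second is `y` resp. `λ`;
both identities are stated coefficientwise.) -/
theorem stmt_5 (e : ℕ) (S : ℕ → ℕ → ℂ) (hS : ∀ n, (Function.support (S n)).Finite)
    (g φ : PowerSeries ℂ) :
    (∀ d : Fin 2 →₀ ℕ,
        S (d 0) (d 1) / (Nat.factorial (d 0) : ℂ) =
          MvPowerSeries.coeff d (subst1 g (MvPowerSeries.X 0) * expY φ)) ↔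
    (∀ f : PowerSeries ℂ, ∀ d : Fin 2 →₀ ℕ,
        (∑ᶠ k : ℕ, S (d 1) k * ((Nat.factorial (d 1) : ℂ)⁻¹ *
            PowerSeries.coeff (d 0)
              (PowerSeries.X ^ ((d 1) * e + k) * PowerSeries.derivativeFun^[k] f))) =
          MvPowerSeries.coeff d
            (subst1 g (MvPowerSeries.X 1 * MvPowerSeries.X 0 ^ e) *
              subst1 f (MvPowerSeries.X 0 *
                (1 + subst1 φ (MvPowerSeries.X 1 * MvPowerSeries.X 0 ^ e))))) :=
  stmt_5_general e S g φ
end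

section
/- Let x > 0 be real, and let λ, θ ∈ ℝ satisfy |λ| + |θ| < 1/(4x²). For f : ℝ → ℝ define U_λ[f](x) := (1 − 4λx²)^{−3/4} · f( x/√(1 − 4λx²) ). Then 1 − 4λx² > 0, the point s := x/√(1 − 4λx²) satisfies |θ| < 1/(4s²), and U_λ[U_θ[f]](x) = U_{λ+θ}[f](x); explicitly, (1 − 4λx²)^{−3/4} · (1 − 4θs²)^{−3/4} · f( s/√(1 − 4θs²) ) = (1 − 4(λ+θ)x²)^{−3/4} · f( x/√(1 − 4(λ+θ)x²) ). (This is the one-parameter group generated by the Bargmann–Fock image of Ω = (a⁺)²aa⁺ + a⁺a(a⁺)².) -/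
open Real

/-- The one-parameter group `U_λ[f](x) = (1−4λx²)^{−3/4}·f(x/√(1−4λx²))` integrating
`exp(λ ρ_BF(Ω))` for `Ω = (a⁺)²aa⁺ + a⁺a(a⁺)²`. -/
noncomputable def U (lam : ℝ) (f : ℝ → ℝ) (x : ℝ) : ℝ :=
  (1 - 4 * lam * x ^ 2) ^ (-(3 : ℝ) / 4) * f (x / Real.sqrt (1 - 4 * lam * x ^ 2))

/-!
With `A = 1 − 4λx²` and `s = x/√A` one has `s² = x²/A`, hence
`1 − 4θs² = (1 − 4(λ+θ)x²)/A`. Both the prefactor `(·)^{-3/4}` and the argument `s/√(·)` are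
multiplicative in this quotient, so the factors of `A` cancel and `U_λ ∘ U_θ = U_{λ+θ}` at `x`.
-/

lemma sq_div_sqrt_one_sub {lam x : ℝ} (hA : 0 < 1 - 4 * lam * x ^ 2) :
    (x / √(1 - 4 * lam * x ^ 2)) ^ 2 = x ^ 2 / (1 - 4 * lam * x ^ 2) := by
  rw [div_pow, sq_sqrt hA.le]

lemma one_sub_four_mul_sq_div_sqrt {lam θ x : ℝ} (hA : 0 < 1 - 4 * lam * x ^ 2) :
    1 - 4 * θ * (x / √(1 - 4 * lam * x ^ 2)) ^ 2 =
      (1 - 4 * (lam + θ) * x ^ 2) / (1 - 4 * lam * x ^ 2) := by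
  rw [sq_div_sqrt_one_sub hA, eq_div_iff hA.ne', sub_mul, mul_assoc (4 * θ),
    div_mul_cancel₀ _ hA.ne']
  ring

theorem U_U_eq_U_add {lam θ x : ℝ} (f : ℝ → ℝ) (hA : 0 < 1 - 4 * lam * x ^ 2)
    (hC : 0 ≤ 1 - 4 * (lam + θ) * x ^ 2) :
    U lam (U θ f) x = U (lam + θ) f x := by
  unfold U
  rw [one_sub_four_mul_sq_div_sqrt hA, div_rpow hC hA.le, sqrt_div' _ hA.le,
    div_div_div_cancel_right₀ (sqrt_pos.mpr hA).ne']
  have : (1 - 4 * lam * x ^ 2) ^ (-(3 : ℝ) / 4) ≠ 0 := (rpow_pos_of_pos hA _).ne'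
  field_simp

theorem stmt_6_general (x lam θ : ℝ)
    (h : |lam| + |θ| < 1 / (4 * x ^ 2)) (f : ℝ → ℝ) :
    0 < 1 - 4 * lam * x ^ 2 ∧
    |θ| < 1 / (4 * (x / Real.sqrt (1 - 4 * lam * x ^ 2)) ^ 2) ∧
    U lam (U θ f) x = U (lam + θ) f x := by
  have hx : 0 < 4 * x ^ 2 := one_div_pos.mp ((by positivity : 0 ≤ |lam| + |θ|).trans_lt h)
  have hsum : (|lam| + |θ|) * (4 * x ^ 2) < 1 := (lt_div_iff₀ hx).mp h
  have hlam := le_abs_self lam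
  have hθ := le_abs_self θ
  have hA : 0 < 1 - 4 * lam * x ^ 2 := by nlinarith [abs_nonneg θ]
  have hC : 0 ≤ 1 - 4 * (lam + θ) * x ^ 2 := by nlinarith
  refine ⟨hA, ?_, U_U_eq_U_add f hA hC⟩
  rw [sq_div_sqrt_one_sub hA, mul_div_assoc', one_div_div, lt_div_iff₀ hx]
  nlinarith

/-- The group law `U_λ ∘ U_θ = U_{λ+θ}` for suitably small parameters:
if `x > 0` and `|λ| + |θ| < 1/(4x²)` then `1 − 4λx² > 0`, the point
`s = x/√(1−4λx²)` satisfies `|θ| < 1/(4s²)`, and `U_λ[U_θ[f]](x) = U_{λ+θ}[f](x)`. -/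
theorem stmt_6 (x lam θ : ℝ) (hx : 0 < x)
    (h : |lam| + |θ| < 1 / (4 * x ^ 2)) (f : ℝ → ℝ) :
    0 < 1 - 4 * lam * x ^ 2 ∧
    |θ| < 1 / (4 * (x / Real.sqrt (1 - 4 * lam * x ^ 2)) ^ 2) ∧
    U lam (U θ f) x = U (lam + θ) f x :=
  stmt_6_general x lam θ h f
end

section
/- Let x > 0 be real and let f : ℝ → ℝ be differentiable at x. Then the function λ ↦ U_λ[f](x) = (1 − 4λx²)^{−3/4} · f( x/√(1 − 4λx²) ), defined for |λ| < 1/(4x²), is differentiable at λ = 0 with derivative 2x³·f′(x) + 3x²·f(x). (Equivalently, the infinitesimal generator of the one-parameter group U_λ is x²(d/dx)x + x(d/dx)x², since x²·(x f)′(x) + x·(x² f)′(x) = 2x³ f′(x) + 3x² f(x).) -/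
open Real

lemma hasDerivAt_one_sub_mul (c : ℝ) : HasDerivAt (fun l : ℝ => 1 - c * l) (-c) 0 := by
  simpa using ((hasDerivAt_id (0 : ℝ)).const_mul c).const_sub 1

lemma hasDerivAt_one_sub_mul_rpow (c p : ℝ) :
    HasDerivAt (fun l : ℝ => (1 - c * l) ^ p) (-(p * c)) 0 := by
  refine ((hasDerivAt_one_sub_mul c).rpow_const (Or.inl (by norm_num))).congr_deriv ?_
  simp [mul_comm]

lemma hasDerivAt_div_sqrt_one_sub_mul (x c : ℝ) :
    HasDerivAt (fun l : ℝ => x / √(1 - c * l)) (c * x / 2) 0 := by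
  have hsqrt := (hasDerivAt_one_sub_mul c).sqrt (by norm_num)
  refine ((hasDerivAt_const (0 : ℝ) x).div hsqrt (by simp)).congr_deriv ?_
  simp only [mul_zero, sub_zero, sqrt_one, mul_one, zero_sub, one_pow, div_one]
  ring

theorem stmt_7_general (x : ℝ) (f : ℝ → ℝ) (f' : ℝ)
    (hf : HasDerivAt f f' x) :
    HasDerivAt (fun lam => U lam f x) (2 * x ^ 3 * f' + 3 * x ^ 2 * f x) 0 := by
  have hweight := hasDerivAt_one_sub_mul_rpow (4 * x ^ 2) (-3 / 4)
  have hscale := hasDerivAt_div_sqrt_one_sub_mul x (4 * x ^ 2)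
  have hf0 : HasDerivAt f f' (x / √(1 - 4 * x ^ 2 * 0)) := by simpa using hf
  have hU : (fun lam => U lam f x) =
      fun l => (1 - 4 * x ^ 2 * l) ^ (-3 / 4 : ℝ) * f (x / √(1 - 4 * x ^ 2 * l)) := by
    funext lam
    simp only [U]
    ring_nf
  rw [hU]
  refine (hweight.mul (hf0.comp 0 hscale)).congr_deriv ?_
  simp only [Function.comp_apply, mul_zero, sub_zero, sqrt_one, div_one, neg_mul, one_rpow,
    one_mul]
  ring

/-- Tangent vector at `λ = 0`: for `x > 0` and `f` differentiable at `x`,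
`λ ↦ U_λ[f](x)` is differentiable at `0` with derivative `2x³·f′(x) + 3x²·f(x)`,
i.e. the infinitesimal generator of `U_λ` is `x²(d/dx)x + x(d/dx)x²`. -/
theorem stmt_7 (x : ℝ) (hx : 0 < x) (f : ℝ → ℝ) (f' : ℝ)
    (hf : HasDerivAt f f' x) :
    HasDerivAt (fun lam => U lam f x) (2 * x ^ 3 * f' + 3 * x ^ 2 * f x) 0 :=
  stmt_7_general x f f' hf
end

section
/- (Kurbanov–Maksimov) Let K be a field of characteristic zero and let φ be a linear endomorphism of K[x]. Define a sequence of polynomials (P_k)_{k∈ℕ} by the recursion P_0 = φ(1) and P_{n+1} = φ( x^{n+1}/(n+1)! ) − Σ_{k=0}^{n} P_k · x^{n+1−k}/(n+1−k)!. Then for every polynomial Q ∈ K[x], φ(Q) = Σ_{k∈ℕ} P_k · (D^k Q), where D is the formal derivative and all but finitely many terms vanish (D^k Q = 0 for k > deg Q); i.e., φ is the sum of the summable series Σ_{k≥0} P_k(X) D^k in the topology of simple convergence on End(K[x]) with K[x] discrete. -/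
open Polynomial

/-!
Both sides of the identity are `K`-linear in `Q`, so it suffices to compare them on the
divided powers `xⁿ/n!`. Since `Dᵏ (xⁿ/n!) = x^(n-k)/(n-k)!`, the operator `∑ₖ Pₖ Dᵏ` sends
`xⁿ/n!` to `∑_{k ≤ n} Pₖ x^(n-k)/(n-k)!`, and the recursion defining the `Pₖ` says exactly
that `φ (xⁿ/n!)` is this sum.
-/

namespace Polynomial

section DiffOp

variable {R : Type*} [CommSemiring R]

theorem support_mul_iterate_derivative_subset (P : ℕ → R[X]) (Q : R[X]) :
    (Function.support fun k => P k * derivative^[k] Q) ⊆ Finset.range (Q.natDegree + 1) := by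
  intro k hk
  by_contra hkQ
  simp only [Finset.coe_range, Set.mem_Iio, not_lt] at hkQ
  exact hk (by dsimp only; rw [iterate_derivative_eq_zero (by omega), mul_zero])

theorem finite_support_mul_iterate_derivative (P : ℕ → R[X]) (Q : R[X]) :
    (Function.support fun k => P k * derivative^[k] Q).Finite :=
  (Finset.range _).finite_toSet.subset (support_mul_iterate_derivative_subset P Q)

noncomputable def diffOp (P : ℕ → R[X]) : R[X] →ₗ[R] R[X] where
  toFun Q := ∑ᶠ k, P k * derivative^[k] Q
  map_add' Q₁ Q₂ := by
    simp only [iterate_map_add, mul_add]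
    exact finsum_add_distrib (finite_support_mul_iterate_derivative P Q₁)
      (finite_support_mul_iterate_derivative P Q₂)
  map_smul' a Q := by
    simp only [iterate_derivative_smul, mul_smul_comm, RingHom.id_apply]
    exact (smul_finsum' a (finite_support_mul_iterate_derivative P Q)).symm

theorem diffOp_apply (P : ℕ → R[X]) (Q : R[X]) :
    diffOp P Q = ∑ᶠ k, P k * derivative^[k] Q :=
  rfl

theorem diffOp_apply_of_natDegree_lt (P : ℕ → R[X]) {Q : R[X]} {N : ℕ}
    (hN : Q.natDegree < N) :
    diffOp P Q = ∑ k ∈ Finset.range N, P k * derivative^[k] Q :=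
  finsum_eq_sum_of_support_subset _ <| (support_mul_iterate_derivative_subset P Q).trans <|
    Finset.coe_subset.2 (Finset.range_subset_range.2 hN)

end DiffOp

section DividedPowers

open scoped Nat

variable {K : Type*} [Field K] [CharZero K]

theorem iterate_derivative_inv_factorial_smul_X_pow {n k : ℕ} (hk : k ≤ n) :
    derivative^[k] (((n ! : K)⁻¹) • (X ^ n : K[X])) = ((n - k)! : K)⁻¹ • X ^ (n - k) := by
  rw [iterate_derivative_smul, iterate_derivative_X_pow_eq_smul, smul_smul]
  congr 1
  have hfac : ((n - k)! : K) * n.descFactorial k = n ! := by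
    exact_mod_cast Nat.factorial_mul_descFactorial hk
  have hn : (n ! : K) ≠ 0 := Nat.cast_ne_zero.2 n.factorial_ne_zero
  have hnk : ((n - k)! : K) ≠ 0 := Nat.cast_ne_zero.2 (n - k).factorial_ne_zero
  field_simp
  linear_combination hfac

theorem linearMap_ext_inv_factorial_smul_X_pow {M : Type*} [AddCommMonoid M] [Module K M]
    {f g : K[X] →ₗ[K] M}
    (h : ∀ n : ℕ, f (((n ! : K)⁻¹) • X ^ n) = g (((n ! : K)⁻¹) • X ^ n)) : f = g := by
  refine lhom_ext' fun n => LinearMap.ext_ring ?_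
  have hX : monomial n (1 : K) = (n ! : K) • (((n ! : K)⁻¹) • X ^ n) := by
    rw [smul_smul, mul_inv_cancel₀ (Nat.cast_ne_zero.2 n.factorial_ne_zero), one_smul,
      monomial_one_right_eq_X_pow]
  simp only [LinearMap.comp_apply, hX, map_smul, h n]

end DividedPowers

end Polynomial

/-- (Kurbanov–Maksimov) Over a field `K` of characteristic zero, any linear endomorphism
`φ` of `K[x]` is the sum of the summable series `Σ_{k≥0} P_k(X) D^k`, where the
polynomials `P_k` satisfy `P_0 = φ(1)` and
`P_{n+1} = φ(x^{n+1}/(n+1)!) − Σ_{k=0}^{n} P_k·x^{n+1−k}/(n+1−k)!`. -/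
theorem stmt_8 (K : Type*) [Field K] [CharZero K]
    (φ : Polynomial K →ₗ[K] Polynomial K) (P : ℕ → Polynomial K)
    (h0 : P 0 = φ 1)
    (hrec : ∀ n : ℕ,
      P (n + 1) =
        φ ((((n + 1).factorial : K)⁻¹) • Polynomial.X ^ (n + 1)) -
          ∑ k ∈ Finset.range (n + 1),
            P k * ((((n + 1 - k).factorial : K)⁻¹) • Polynomial.X ^ (n + 1 - k))) :
    ∀ Q : Polynomial K,
      φ Q = ∑ᶠ k : ℕ, P k * (⇑Polynomial.derivative)^[k] Q := by
  have hdivided : ∀ n : ℕ, φ (((n.factorial : K)⁻¹) • X ^ n)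
      = ∑ k ∈ Finset.range (n + 1), P k * (((n - k).factorial : K)⁻¹ • X ^ (n - k)) := by
    rintro (_ | n)
    · simpa using h0.symm
    · rw [Finset.sum_range_succ, hrec n, Nat.sub_self, Nat.factorial_zero, Nat.cast_one, inv_one,
        pow_zero, one_smul, mul_one, add_sub_cancel]
  have hφ : φ = diffOp P := by
    refine linearMap_ext_inv_factorial_smul_X_pow fun n => ?_
    have hdeg : (((n.factorial : K)⁻¹) • (X ^ n : K[X])).natDegree < n + 1 :=
      (natDegree_smul_le _ _).trans_lt ((natDegree_X_pow_le n).trans_lt n.lt_succ_self)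
    rw [hdivided, diffOp_apply_of_natDegree_lt P hdeg]
    refine Finset.sum_congr rfl fun k hk => ?_
    rw [iterate_derivative_inv_factorial_smul_X_pow (Nat.lt_succ_iff.1 (Finset.mem_range.1 hk))]
  intro Q
  rw [hφ, diffOp_apply]
end

section
/- (Endomorphism expansion in ladder operators) Let K be a field, V a K-vector space, and let a = (a_n)_{n∈ℕ} and b = (b_n)_{n∈ℕ} be two bases of V such that b_0 = λ·a_0 for some nonzero scalar λ ∈ K. Let R_a be the raising operator of a (the linear endomorphism with R_a(a_n) = a_{n+1}) and L_b the lowering operator of b (the linear endomorphism with L_b(b_0) = 0 and L_b(b_{n+1}) = b_n). For a polynomial P ∈ K[x] write P(a) := Σ_n ⟨P,x^n⟩ a_n ∈ V and P(R_a) := Σ_n ⟨P,x^n⟩ R_a^n ∈ End(V), where ⟨P,x^n⟩ is the coefficient of x^n in P. Given any linear endomorphism φ of V, define polynomials (P_n)_{n∈ℕ} by the recursion λ·P_0(a) = φ(b_0) and λ·P_{n+1}(a) = φ(b_{n+1}) − Σ_{k=0}^{n} P_k(R_a)(b_{n+1−k}) (each P_n is uniquely determined since a is a basis). Then for every v ∈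 V, φ(v) = Σ_{n∈ℕ} P_n(R_a)( L_b^n(v) ), where all but finitely many terms vanish (L_b^n(v) = 0 for n larger than the degree of v with respect to b). -/
/-!
Both sides of the identity are linear in `v`: the right-hand side is, because `L_b` is
locally nilpotent (it kills `b_m` after `m + 1` steps), so the sum is finite for every `v`.
It therefore suffices to compare them on the basis `b`, where `L_b^n (b_m) = b_{m-n}` for
`n ≤ m` and the recursion for the `P_n` unfolds, via `λ P(a) = P(R_a)(b_0)`, to exactly
`φ(b_m) = Σ_{n ≤ m} P_n(R_a)(b_{m-n})`.
-/

/-- For a polynomial `P = Σ ⟨P,x^n⟩ x^n` and a sequence `a` of vectors,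
`P(a) := Σ_n ⟨P,x^n⟩ a_n`. -/
noncomputable def polyVec {K V : Type*} [Field K] [AddCommGroup V] [Module K V]
    (a : ℕ → V) (P : Polynomial K) : V :=
  ∑ n ∈ Finset.range (P.natDegree + 1), P.coeff n • a n

open Function Polynomial

namespace LinearMap

variable {R M N ι : Type*} [Semiring R] [AddCommMonoid M] [Module R M]
  [AddCommMonoid N] [Module R N]

noncomputable def finsumOfHasFiniteSupport (f : ι → M →ₗ[R] N)
    (hf : ∀ v, HasFiniteSupport fun i ↦ f i v) : M →ₗ[R] N where
  toFun v := ∑ᶠ i, f i v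
  map_add' v w := by
    simp only [map_add]
    exact finsum_add_distrib (hf v) (hf w)
  map_smul' c v := by
    simp only [map_smul, RingHom.id_apply]
    exact (smul_finsum' c (hf v)).symm

@[simp]
lemma finsumOfHasFiniteSupport_apply (f : ι → M →ₗ[R] N)
    (hf : ∀ v, HasFiniteSupport fun i ↦ f i v) (v : M) :
    finsumOfHasFiniteSupport f hf v = ∑ᶠ i, f i v :=
  rfl

end LinearMap

section Ladder

variable {R M N : Type*} [Semiring R] [AddCommMonoid M] [Module R M]
  [AddCommMonoid N] [Module R N]

lemma pow_apply_zero_of_raising {a : ℕ → M} {Ra : Module.End R M}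
    (hRa : ∀ n, Ra (a n) = a (n + 1)) (n : ℕ) : (Ra ^ n) (a 0) = a n := by
  induction n with
  | zero => rfl
  | succ n ih => rw [pow_succ', Module.End.mul_apply, ih, hRa]

lemma pow_apply_of_lowering {e : ℕ → M} {L : Module.End R M} (hL0 : L (e 0) = 0)
    (hL : ∀ n, L (e (n + 1)) = e n) (n m : ℕ) :
    (L ^ n) (e m) = if n ≤ m then e (m - n) else 0 := by
  induction n generalizing m with
  | zero => simp
  | succ n ih =>
    cases m with
    | zero => simp [pow_succ, hL0]
    | succ m => simp [pow_succ, hL, ih]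

lemma finsum_apply_pow_apply_of_lowering {e : ℕ → M} {L : Module.End R M} (hL0 : L (e 0) = 0)
    (hL : ∀ n, L (e (n + 1)) = e n) (f : ℕ → M →ₗ[R] N) (m : ℕ) :
    ∑ᶠ n, f n ((L ^ n) (e m)) = ∑ n ∈ Finset.range (m + 1), f n (e (m - n)) := by
  rw [finsum_eq_sum_of_support_subset (s := Finset.range (m + 1))]
  · refine Finset.sum_congr rfl fun n hn ↦ ?_
    rw [pow_apply_of_lowering hL0 hL, if_pos (Nat.lt_succ_iff.1 (Finset.mem_range.1 hn))]
  · intro n hn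
    by_contra hnm
    refine hn ?_
    change f n ((L ^ n) (e m)) = 0
    rw [pow_apply_of_lowering hL0 hL, if_neg (by simpa [Nat.lt_succ_iff] using hnm), map_zero]

end Ladder

lemma exists_pow_apply_eq_zero_of_lowering {R M : Type*} [CommRing R] [AddCommGroup M]
    [Module R M] (b : Module.Basis ℕ R M) {L : Module.End R M} (hL0 : L (b 0) = 0)
    (hL : ∀ n, L (b (n + 1)) = b n) (v : M) : ∃ k, (L ^ k) v = 0 := by
  have hnil : L.maxGenEigenspace 0 = ⊤ := by
    refine eq_top_iff.2 (b.span_eq ▸ Submodule.span_le.2 (Set.range_subset_iff.2 fun m ↦ ?_))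
    refine (Module.End.mem_maxGenEigenspace _ _ _).2 ⟨m + 1, ?_⟩
    simp [pow_apply_of_lowering hL0 hL]
  simpa using (Module.End.mem_maxGenEigenspace L 0 v).1 (hnil ▸ Submodule.mem_top)

lemma hasFiniteSupport_apply_pow_apply_of_lowering {R M N : Type*} [CommRing R]
    [AddCommGroup M] [Module R M] [AddCommGroup N] [Module R N] (b : Module.Basis ℕ R M)
    {L : Module.End R M} (hL0 : L (b 0) = 0) (hL : ∀ n, L (b (n + 1)) = b n)
    (f : ℕ → M →ₗ[R] N) (v : M) :
    HasFiniteSupport fun n ↦ f n ((L ^ n) v) := by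
  obtain ⟨k, hk⟩ := exists_pow_apply_eq_zero_of_lowering b hL0 hL v
  refine (Set.finite_Iio k).subset fun n hn ↦ ?_
  by_contra hkn
  refine hn ?_
  change f n ((L ^ n) v) = 0
  rw [← Nat.sub_add_cancel (not_lt.1 hkn), pow_add, Module.End.mul_apply, hk, map_zero,
    map_zero]

lemma polyVec_eq_aeval_apply {K V : Type*} [Field K] [AddCommGroup V] [Module K V]
    {a : ℕ → V} {Ra : Module.End K V} (hRa : ∀ n, Ra (a n) = a (n + 1)) (Q : K[X]) :
    polyVec a Q = aeval Ra Q (a 0) := by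
  rw [aeval_endomorphism, polyVec,
    sum_over_range' Q (f := fun n c ↦ c • (Ra ^ n) (a 0)) (by simp) _ (Nat.lt_succ_self _)]
  simp only [pow_apply_zero_of_raising hRa]

theorem stmt_9_general {K V : Type*} [Field K] [AddCommGroup V] [Module K V]
    (a b : Module.Basis ℕ K V) (lam : K) (hb0 : b 0 = lam • a 0)
    (Ra Lb : Module.End K V)
    (hRa : ∀ n, Ra (a n) = a (n + 1))
    (hLb0 : Lb (b 0) = 0) (hLb : ∀ n, Lb (b (n + 1)) = b n)
    (φ : Module.End K V) (P : ℕ → Polynomial K)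
    (hP0 : lam • polyVec a (P 0) = φ (b 0))
    (hPrec : ∀ n : ℕ,
      lam • polyVec a (P (n + 1)) =
        φ (b (n + 1)) -
          ∑ k ∈ Finset.range (n + 1), (Polynomial.aeval Ra (P k)) (b (n + 1 - k))) :
    ∀ v : V, φ v = ∑ᶠ n : ℕ, (Polynomial.aeval Ra (P n)) ((Lb ^ n) v) := by
  have hpolyVec (Q : K[X]) : lam • polyVec a Q = aeval Ra Q (b 0) := by
    rw [polyVec_eq_aeval_apply hRa, hb0, map_smul]
  have hφ (m : ℕ) : φ (b m) = ∑ k ∈ Finset.range (m + 1), aeval Ra (P k) (b (m - k)) := by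
    cases m with
    | zero => simp [← hP0, hpolyVec]
    | succ m =>
      rw [Finset.sum_range_succ, Nat.sub_self, ← hpolyVec, hPrec]
      abel
  let ψ := LinearMap.finsumOfHasFiniteSupport (fun n ↦ aeval Ra (P n) * Lb ^ n)
    (hasFiniteSupport_apply_pow_apply_of_lowering b hLb0 hLb fun n ↦ aeval Ra (P n))
  have hφψ : φ = ψ := b.ext fun m ↦ by
    rw [hφ, LinearMap.finsumOfHasFiniteSupport_apply]
    exact (finsum_apply_pow_apply_of_lowering hLb0 hLb (fun n ↦ aeval Ra (P n)) m).symm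
  exact LinearMap.congr_fun hφψ

/-- (Endomorphism expansion in ladder operators) Let `a`, `b` be bases of `V` with
`b_0 = λ·a_0`, `λ ≠ 0`, let `R_a` be the raising operator of `a` and `L_b` the lowering
operator of `b`.  If the polynomials `P_n` satisfy the recursion
`λ·P_0(a) = φ(b_0)`, `λ·P_{n+1}(a) = φ(b_{n+1}) − Σ_{k=0}^{n} P_k(R_a)(b_{n+1−k})`,
then `φ(v) = Σ_n P_n(R_a)(L_b^n(v))` for every `v ∈ V` (all but finitely many terms
vanish). -/
theorem stmt_9 {K V : Type*} [Field K] [AddCommGroup V] [Module K V]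
    (a b : Module.Basis ℕ K V) (lam : K) (hlam : lam ≠ 0) (hb0 : b 0 = lam • a 0)
    (Ra Lb : Module.End K V)
    (hRa : ∀ n, Ra (a n) = a (n + 1))
    (hLb0 : Lb (b 0) = 0) (hLb : ∀ n, Lb (b (n + 1)) = b n)
    (φ : Module.End K V) (P : ℕ → Polynomial K)
    (hP0 : lam • polyVec a (P 0) = φ (b 0))
    (hPrec : ∀ n : ℕ,
      lam • polyVec a (P (n + 1)) =
        φ (b (n + 1)) -
          ∑ k ∈ Finset.range (n + 1), (Polynomial.aeval Ra (P k)) (b (n + 1 - k))) :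
    ∀ v : V, φ v = ∑ᶠ n : ℕ, (Polynomial.aeval Ra (P n)) ((Lb ^ n) v) :=
  stmt_9_general a b lam hb0 Ra Lb hRa hLb0 hLb φ P hP0 hPrec
end

section
/- Let K be a field, α : ℕ → K a sequence of nonzero scalars, and β : ℕ → K a sequence of nonzero scalars with β_0 = 1. Let φ be a continuous linear endomorphism of V̂ (product topology over discrete K). Then there exists a sequence of polynomials (P_n)_{n∈ℕ} in K[x] such that φ is the sum of the summable family (R̂_{β↑}^n ∘ P_n(L̂_{α↓}))_{n∈ℕ}: explicitly, for every S ∈ V̂ and every k ∈ ℕ, (φ S)(k) = Σ_{n=0}^{k} ( R̂_{β↑}^n ( P_n(L̂_{α↓})(S) ) )(k), where for a polynomial P, P(L̂_{α↓}) := Σ_j ⟨P,x^j⟩ L̂_{α↓}^j, and the terms with n > k vanish because (R̂_{β↑}^n T)(k) = 0 for n > k. -/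
/-- The "extended lowering"-type operator on `V̂ = ℕ → K` with coefficients `γ`:
`(S)(n) ↦ γ_n·S(n+1)`. -/
def lowOp (K : Type*) [Field K] (γ : ℕ → K) : (ℕ → K) →ₗ[K] (ℕ → K) where
  toFun S := fun n => γ n * S (n + 1)
  map_add' S T := by funext n; simp [mul_add]
  map_smul' c S := by funext n; simp [mul_left_comm]

/-- The "extended raising"-type operator on `V̂ = ℕ → K` with coefficients `γ`:
`(S)(0) ↦ 0`, `(S)(n+1) ↦ γ_n·S(n)`. -/
def raiseOp (K : Type*) [Field K] (γ : ℕ → K) : (ℕ → K) →ₗ[K] (ℕ → K) where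
  toFun S := fun n => match n with
    | 0 => 0
    | n + 1 => γ n * S n
  map_add' S T := by funext n; cases n <;> simp [mul_add]
  map_smul' c S := by funext n; cases n <;> simp [mul_left_comm]

/-!
A continuous functional on `ℕ → K` (with `K` discrete) sees only finitely many coordinates, so,
since `(L̂^j S)(0) = α_0 ⋯ α_{j-1} S(j)`, it is `S ↦ (P(L̂) S)(0)` for some polynomial `P`.
As `R̂^n T` vanishes in rows `< n` and `(R̂^n T)(n) = β_1 ⋯ β_n T(0)`, the polynomials are found
one row at a time: `P_n` makes `R̂^n P_n(L̂)` agree in row `n` with the remainder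
`φ - Σ_{m<n} R̂^m P_m(L̂)`, which therefore vanishes in all rows `≤ n`.
-/

open Polynomial Finset

section Continuity

variable {R M : Type*} [CommSemiring R] [AddCommMonoid M] [Module R M] [TopologicalSpace M]
  [ContinuousAdd M] [ContinuousConstSMul R M]

theorem continuous_aeval_of_continuous {f : Module.End R M} (hf : Continuous f) (P : R[X]) :
    Continuous (aeval f P) := by
  induction P using Polynomial.induction_on' with
  | add p q hp hq => rw [map_add]; exact hp.add hq
  | monomial n a =>
    convert (hf.iterate n).const_smul a using 1
    ext x
    simp [aeval_monomial, Module.End.coe_pow]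

end Continuity

theorem LinearMap.exists_finset_apply_eq_sum_of_continuous {ι K : Type*} [DecidableEq ι] [Field K]
    [TopologicalSpace K] [DiscreteTopology K] (f : (ι → K) →ₗ[K] K) (hf : Continuous f) :
    ∃ s : Finset ι, ∀ S, f S = ∑ i ∈ s, S i * f (Pi.single i 1) := by
  obtain ⟨s, u, hu, hsub⟩ := isOpen_pi_iff.mp (hf.isOpen_preimage {0} (isOpen_discrete _)) 0
    (by simp)
  refine ⟨s, fun S => ?_⟩
  have hker : f (S - ∑ i ∈ s, S i • Pi.single i 1) = 0 := hsub fun i hi => by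
    have : (S - ∑ i ∈ s, S i • Pi.single i 1 : ι → K) i = 0 := by
      simp [Pi.single_apply, Finset.mem_coe.mp hi]
    exact this ▸ (hu i hi).2
  rw [map_sub, sub_eq_zero] at hker
  simp [hker, map_sum]

section Operators

variable {K : Type*} [Field K]

theorem lowOp_pow_apply_zero (α : ℕ → K) (j : ℕ) (S : ℕ → K) :
    (lowOp K α ^ j) S 0 = (∏ i ∈ range j, α i) * S j := by
  induction j generalizing S with
  | zero => simp
  | succ j ih =>
    rw [pow_succ, Module.End.mul_apply, ih, prod_range_succ, mul_assoc]
    rfl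

theorem raiseOp_pow_apply_of_lt (γ : ℕ → K) {n k : ℕ} (h : k < n) (T : ℕ → K) :
    (raiseOp K γ ^ n) T k = 0 := by
  induction n generalizing k with
  | zero => omega
  | succ n ih =>
    rw [pow_succ', Module.End.mul_apply]
    rcases k with _ | k
    · rfl
    · exact (mul_eq_zero_of_right _ (ih (by omega)))

theorem raiseOp_pow_apply_self (γ : ℕ → K) (n : ℕ) (T : ℕ → K) :
    (raiseOp K γ ^ n) T n = (∏ i ∈ range n, γ i) * T 0 := by
  induction n with
  | zero => simp
  | succ n ih =>
    rw [pow_succ', Module.End.mul_apply, prod_range_succ]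
    change γ n * _ = _
    rw [ih]
    ring

noncomputable def rowPoly (α γ : ℕ → K) (ψ : Module.End K (ℕ → K)) (n : ℕ) : K[X] :=
  Classical.epsilon fun P => ∀ S, (raiseOp K γ ^ n) (aeval (lowOp K α) P S) n = ψ S n

noncomputable def peelRemainder (α γ : ℕ → K) (φ : Module.End K (ℕ → K)) :
    ℕ → Module.End K (ℕ → K)
  | 0 => φ
  | n + 1 => peelRemainder α γ φ n -
      raiseOp K γ ^ n * aeval (lowOp K α) (rowPoly α γ (peelRemainder α γ φ n) n)

noncomputable def peelPoly (α γ : ℕ → K) (φ : Module.End K (ℕ → K)) (n : ℕ) : K[X] :=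
  rowPoly α γ (peelRemainder α γ φ n) n

theorem apply_eq_peelRemainder_add_sum (α γ : ℕ → K) (φ : Module.End K (ℕ → K)) (n : ℕ)
    (S : ℕ → K) (k : ℕ) :
    φ S k = peelRemainder α γ φ n S k +
      ∑ m ∈ range n, (raiseOp K γ ^ m) (aeval (lowOp K α) (peelPoly α γ φ m) S) k := by
  induction n with
  | zero => simp [peelRemainder]
  | succ n ih =>
    rw [ih, sum_range_succ, peelRemainder, peelPoly]
    simp only [LinearMap.sub_apply, Module.End.mul_apply, Pi.sub_apply]
    ring

section Topology

variable [TopologicalSpace K]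

theorem continuous_lowOp [ContinuousMul K] (α : ℕ → K) : Continuous (lowOp K α) :=
  continuous_pi fun n => continuous_const.mul (continuous_apply (n + 1))

theorem continuous_raiseOp [ContinuousMul K] (γ : ℕ → K) : Continuous (raiseOp K γ) :=
  continuous_pi fun n => by
    rcases n with _ | n
    · exact continuous_const
    · exact continuous_const.mul (continuous_apply n)

theorem exists_aeval_lowOp_apply_zero_eq [DiscreteTopology K] {α : ℕ → K} (hα : ∀ n, α n ≠ 0)
    (f : (ℕ → K) →ₗ[K] K) (hf : Continuous f) :
    ∃ P : K[X], ∀ S, aeval (lowOp K α) P S 0 = f S := by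
  obtain ⟨s, hs⟩ := f.exists_finset_apply_eq_sum_of_continuous hf
  refine ⟨∑ j ∈ s, monomial j (f (Pi.single j 1) / ∏ i ∈ range j, α i), fun S => ?_⟩
  have hA : ∀ j, ∏ i ∈ range j, α i ≠ 0 := fun j => prod_ne_zero_iff.mpr fun i _ => hα i
  rw [hs]
  simp only [map_sum, aeval_monomial, LinearMap.coe_sum, Finset.sum_apply, Module.End.mul_apply,
    Module.algebraMap_end_apply, Pi.smul_apply, lowOp_pow_apply_zero, smul_eq_mul]
  refine sum_congr rfl fun j _ => ?_
  field_simp [hA j]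

theorem exists_raiseOp_pow_aeval_apply_self_eq [DiscreteTopology K]
    {α γ : ℕ → K} (hα : ∀ n, α n ≠ 0) (hγ : ∀ n, γ n ≠ 0) {ψ : Module.End K (ℕ → K)}
    (hψ : Continuous ψ) (n : ℕ) :
    ∃ P : K[X], ∀ S, (raiseOp K γ ^ n) (aeval (lowOp K α) P S) n = ψ S n := by
  have hc : ∏ i ∈ range n, γ i ≠ 0 := prod_ne_zero_iff.mpr fun i _ => hγ i
  obtain ⟨P, hP⟩ := exists_aeval_lowOp_apply_zero_eq hα
    ((∏ i ∈ range n, γ i)⁻¹ • (LinearMap.proj n ∘ₗ ψ)) (((continuous_apply n).comp hψ).const_smul _)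
  refine ⟨P, fun S => ?_⟩
  rw [raiseOp_pow_apply_self, hP]
  simp [hc]

theorem raiseOp_pow_aeval_rowPoly_apply_self [DiscreteTopology K]
    {α γ : ℕ → K} (hα : ∀ n, α n ≠ 0) (hγ : ∀ n, γ n ≠ 0) {ψ : Module.End K (ℕ → K)}
    (hψ : Continuous ψ) (n : ℕ) (S : ℕ → K) :
    (raiseOp K γ ^ n) (aeval (lowOp K α) (rowPoly α γ ψ n) S) n = ψ S n :=
  Classical.epsilon_spec (exists_raiseOp_pow_aeval_apply_self_eq hα hγ hψ n) S

theorem continuous_peelRemainder [IsTopologicalRing K] (α γ : ℕ → K)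
    {φ : Module.End K (ℕ → K)} (hφ : Continuous φ) (n : ℕ) :
    Continuous (peelRemainder α γ φ n) := by
  induction n with
  | zero => exact hφ
  | succ n ih =>
    have hRn : Continuous (raiseOp K γ ^ n) := by
      simpa only [Module.End.coe_pow] using (continuous_raiseOp γ).iterate n
    exact ih.sub (hRn.comp (continuous_aeval_of_continuous (continuous_lowOp α) _))

theorem peelRemainder_apply_of_lt [DiscreteTopology K] {α γ : ℕ → K}
    (hα : ∀ n, α n ≠ 0) (hγ : ∀ n, γ n ≠ 0) {φ : Module.End K (ℕ → K)} (hφ : Continuous φ)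
    {n k : ℕ} (h : k < n) (S : ℕ → K) :
    peelRemainder α γ φ n S k = 0 := by
  induction n with
  | zero => omega
  | succ n ih =>
    rw [peelRemainder, LinearMap.sub_apply, Module.End.mul_apply, Pi.sub_apply]
    rcases (Nat.lt_succ_iff_lt_or_eq.mp h) with hk | rfl
    · rw [ih hk, raiseOp_pow_apply_of_lt γ hk, sub_zero]
    · rw [raiseOp_pow_aeval_rowPoly_apply_self hα hγ (continuous_peelRemainder α γ hφ k), sub_self]

end Topology

end Operators

theorem stmt_17_general (K : Type*) [Field K] (α β : ℕ → K)
    (hα : ∀ n, α n ≠ 0) (hβ : ∀ n, β n ≠ 0)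
    (φ : (ℕ → K) →ₗ[K] (ℕ → K))
    (hφ : @Continuous (ℕ → K) (ℕ → K)
      (@Pi.topologicalSpace ℕ (fun _ => K) (fun _ => ⊥))
      (@Pi.topologicalSpace ℕ (fun _ => K) (fun _ => ⊥)) φ) :
    ∃ P : ℕ → Polynomial K, ∀ (S : ℕ → K) (k : ℕ),
      φ S k = ∑ n ∈ Finset.range (k + 1),
        (((raiseOp K fun m => β (m + 1)) ^ n)
          ((Polynomial.aeval (lowOp K α) (P n)) S)) k := by
  let : TopologicalSpace K := ⊥
  have : DiscreteTopology K := ⟨rfl⟩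
  refine ⟨peelPoly α (fun m => β (m + 1)) φ, fun S k => ?_⟩
  rw [apply_eq_peelRemainder_add_sum α _ φ (k + 1),
    peelRemainder_apply_of_lt hα (fun m => hβ (m + 1)) hφ (Nat.lt_succ_self k), zero_add]

/-- Every continuous linear endomorphism `φ` of `V̂ = ℕ → K` (product topology over
discrete `K`) is the sum of a summable family `(R̂_{β↑}^n ∘ P_n(L̂_{α↓}))_n` for some
polynomials `P_n`; here `(L̂_{α↓}S)(n) = α_n·S(n+1)` and `(R̂_{β↑}S)(0) = 0`,
`(R̂_{β↑}S)(n+1) = β_{n+1}·S(n)`.  Explicitly, for every `S` and `k`,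
`(φS)(k) = Σ_{n=0}^{k} (R̂_{β↑}^n(P_n(L̂_{α↓})(S)))(k)`, the terms with `n > k`
vanishing. -/
theorem stmt_17 (K : Type*) [Field K] (α β : ℕ → K)
    (hα : ∀ n, α n ≠ 0) (hβ : ∀ n, β n ≠ 0) (hβ0 : β 0 = 1)
    (φ : (ℕ → K) →ₗ[K] (ℕ → K))
    (hφ : @Continuous (ℕ → K) (ℕ → K)
      (@Pi.topologicalSpace ℕ (fun _ => K) (fun _ => ⊥))
      (@Pi.topologicalSpace ℕ (fun _ => K) (fun _ => ⊥)) φ) :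
    ∃ P : ℕ → Polynomial K, ∀ (S : ℕ → K) (k : ℕ),
      φ S k = ∑ n ∈ Finset.range (k + 1),
        (((raiseOp K fun m => β (m + 1)) ^ n)
          ((Polynomial.aeval (lowOp K α) (P n)) S)) k :=
  stmt_17_general K α β hα hβ φ hφ
end
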